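/- Every finite poset that is a flower is sub-representable. -/

import Mathlib

/-!
Write `C = D(x) ∪ {x}` and `U = U(x)`: then `C` is a chain lying entirely below the antichain `U`.
A subset `S` meeting `U` in at least two points embeds into `T` exactly when `T` has at least
as many points as `S` in `C` and in `U`; any other subset is a chain, and embeds into `T` exactly
when its size is at most the height of `T`. Both cases are captured by a pair of natural numbers
compared componentwise, and `g` sends `S` to a canonical set with the same pair, assembled from
fixed increasing families of subsets of `C` and of `U`.
-/

def SubRepresentable (α : Type*) [PartialOrder α] : Prop :=
  ∃ g : Set α → Set α,
    (∀ P₁ P₂ : Set α, Nonempty (↥P₁ ↪o ↥P₂) ↔ g P₁ ⊆ g P₂) ∧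
    ∀ P₁ : Set α, Nonempty (↥P₁ ↪o ↥(g P₁)) ∧ Nonempty (↥(g P₁) ↪o ↥P₁)
def IsFlower (α : Type*) [PartialOrder α] : Prop :=
  ∃ x : α, IsChain (· ≤ ·) {y : α | y < x} ∧
    IsAntichain (· ≤ ·) {y : α | x < y} ∧ ({y : α | x < y}).Nontrivial ∧
    ∀ y : α, y < x ∨ y = x ∨ x < y

open Set

section Cardinality

variable {α : Type*} [Finite α]

theorem ncard_inter_le_of_embedding {S T A B : Set α} (f : S ↪ T)
    (hf : ∀ s : S, (s : α) ∈ A → (f s : α) ∈ B) : (S ∩ A).ncard ≤ (T ∩ B).ncard := by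
  rw [← Nat.card_coe_set_eq, ← Nat.card_coe_set_eq]
  exact Nat.card_le_card_of_injective (fun y => ⟨f ⟨y, y.2.1⟩, (f _).2, hf _ y.2.2⟩)
    fun _ _ hyz => Subtype.ext (Subtype.mk.inj (f.injective (Subtype.ext (Subtype.mk.inj hyz))))

theorem exists_monotone_subset_ncard_eq (s : Set α) :
    ∃ F : ℕ → Set α, Monotone F ∧ (∀ k, F k ⊆ s) ∧ ∀ k ≤ s.ncard, (F k).ncard = k := by
  let e := (Finite.equivFin s).trans (finCongr (Nat.card_coe_set_eq s))
  refine ⟨fun k => Subtype.val '' (e ⁻¹' {i | (i : ℕ) < k}), fun k l hkl => ?_, fun k => ?_,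
    fun k hk => ?_⟩
  · exact image_mono (preimage_mono fun i (hi : (i : ℕ) < k) => hi.trans_le hkl)
  · exact Subtype.coe_image_subset s _
  · have hval : Fin.val '' {i : Fin s.ncard | (i : ℕ) < k} = Iio k := by
      ext m
      simp only [mem_image, mem_ofPred_eq, mem_Iio]
      exact ⟨by rintro ⟨i, hi, rfl⟩; exact hi, fun hm => ⟨⟨m, hm.trans_le hk⟩, hm, rfl⟩⟩
    rw [Subtype.val_injective.injOn.ncard_image, ncard_preimage_of_injective_subset_range
      e.injective (by simp), ← Fin.val_injective.injOn.ncard_image, hval, ncard_Iio_nat]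

end Cardinality

section Flower

variable {α : Type*} [PartialOrder α]

def Set.inclusionOrderEmbedding {s t : Set α} (h : s ⊆ t) : s ↪o t :=
  .ofMapLEIff (inclusion h) fun _ _ => Iff.rfl

theorem subRepresentable_of_classifier {β : Type*} [Preorder β] (κ : Set α → β)
    (R : β → Set α) (hκ : ∀ S T : Set α, Nonempty (S ↪o T) ↔ κ S ≤ κ T) (hR : Monotone R)
    (hκR : ∀ S, κ (R (κ S)) = κ S) : SubRepresentable α := by
  refine ⟨R ∘ κ, fun S T => ⟨fun h => hR ((hκ S T).1 h), fun h => (hκ S T).2 ?_⟩,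
    fun S => ⟨(hκ _ _).2 (hκR S).ge, (hκ _ _).2 (hκR S).le⟩⟩
  rw [← hκR S, ← hκR T]
  exact (hκ _ _).1 ⟨inclusionOrderEmbedding h⟩

structure IsFlowerDecomposition (C U : Set α) : Prop where
  mem_or_mem : ∀ y, y ∈ C ∨ y ∈ U
  lt : ∀ ⦃c⦄, c ∈ C → ∀ ⦃u⦄, u ∈ U → c < u
  isChain : IsChain (· ≤ ·) C
  isAntichain : IsAntichain (· ≤ ·) U

theorem isFlowerDecomposition_Iic_Ioi {x : α} (hD : IsChain (· ≤ ·) (Iio x))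
    (hU : IsAntichain (· ≤ ·) (Ioi x)) (hcmp : ∀ y, y < x ∨ y = x ∨ x < y) :
    IsFlowerDecomposition (Iic x) (Ioi x) where
  mem_or_mem y := by
    rcases hcmp y with h | rfl | h
    exacts [Or.inl h.le, Or.inl le_rfl, Or.inr h]
  lt _ hc _ hu := lt_of_le_of_lt hc hu
  isChain := by
    rw [← Iio_insert]
    exact hD.insert fun _ hb _ => Or.inr hb.le
  isAntichain := hU

/-- A chain of size `n` is recorded as `n - 1` points of `C` below one point of `U`; truncated
subtraction gives `(0, 0)` for the empty set. -/
noncomputable def flowerShape (C U S : Set α) : ℕ × ℕ :=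
  if 2 ≤ (S ∩ U).ncard then ((S ∩ C).ncard, (S ∩ U).ncard) else (S.ncard - 1, min S.ncard 1)

namespace IsFlowerDecomposition

variable {C U : Set α}

theorem disjoint (hF : IsFlowerDecomposition C U) : Disjoint C U :=
  disjoint_left.2 fun _ hC hU => (hF.lt hC hU).false

theorem le_iff_eq_of_mem (hF : IsFlowerDecomposition C U) {y z : α} (hy : y ∈ U) (hz : z ∈ U) :
    y ≤ z ↔ y = z :=
  ⟨hF.isAntichain.eq hy hz, fun h => h.le⟩

theorem mem_of_not_le_of_not_le (hF : IsFlowerDecomposition C U) {y z : α} (hyz : ¬ y ≤ z)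
    (hzy : ¬ z ≤ y) : y ∈ U := by
  refine (hF.mem_or_mem y).resolve_left fun hy => ?_
  rcases hF.mem_or_mem z with hz | hz
  · exact (hF.isChain.total hy hz).elim hyz hzy
  · exact hyz (hF.lt hy hz).le

/-- Two incomparable points of `U` force their images into `U`, and everything below them
into `C`. -/
theorem mem_of_orderEmbedding (hF : IsFlowerDecomposition C U) {S T : Set α} (f : S ↪o T)
    (hS : 2 ≤ (S ∩ U).ncard) (s : S) :
    ((s : α) ∈ U → (f s : α) ∈ U) ∧ ((s : α) ∈ C → (f s : α) ∈ C) := by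
  have hU : ∀ u : S, (u : α) ∈ U → (f u : α) ∈ U := by
    intro u hu
    obtain ⟨v, hv, hvu⟩ := exists_ne_of_one_lt_ncard hS u
    have huv : ¬ u ≤ (⟨v, hv.1⟩ : S) := hF.isAntichain hu hv.2 hvu.symm
    have hvu : ¬ (⟨v, hv.1⟩ : S) ≤ u := hF.isAntichain hv.2 hu hvu
    exact hF.mem_of_not_le_of_not_le (mt f.le_iff_le.1 huv) (mt f.le_iff_le.1 hvu)
  refine ⟨hU s, fun hs => (hF.mem_or_mem _).resolve_right fun hfs => ?_⟩
  obtain ⟨u, hu⟩ := nonempty_of_ncard_ne_zero (s := S ∩ U) (by omega)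
  have hlt : f s < f ⟨u, hu.1⟩ := f.lt_iff_lt.2 (hF.lt hs hu.2)
  exact hF.isAntichain hfs (hU _ hu.2) (Subtype.coe_injective.ne hlt.ne) hlt.le

end IsFlowerDecomposition

variable [Finite α]

namespace IsChain

theorem nonempty_orderEmbedding_of_ncard_le {s t : Set α} (hs : IsChain (· ≤ ·) s)
    (ht : IsChain (· ≤ ·) t) (h : s.ncard ≤ t.ncard) : Nonempty (s ↪o t) := by
  classical
  let := hs.linearOrder
  let := ht.linearOrder
  have : Fintype s := Fintype.ofFinite s
  have : Fintype t := Fintype.ofFinite t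
  rw [← Nat.card_coe_set_eq, ← Nat.card_coe_set_eq, Nat.card_eq_fintype_card,
    Nat.card_eq_fintype_card] at h
  exact ⟨((Fintype.orderIsoFinOfCardEq s rfl).symm.toOrderEmbedding.trans
    (Fin.castLEOrderEmb h)).trans (Fintype.orderIsoFinOfCardEq t rfl).toOrderEmbedding⟩

theorem nonempty_orderEmbedding_iff {S T : Set α} (hS : IsChain (· ≤ ·) S) :
    Nonempty (S ↪o T) ↔ ∃ P ⊆ T, IsChain (· ≤ ·) P ∧ S.ncard ≤ P.ncard := by
  constructor
  · rintro ⟨f⟩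
    refine ⟨range (Subtype.val ∘ f), range_subset_iff.2 fun s => (f s).2, ?_, ?_⟩
    · rintro - ⟨a, rfl⟩ - ⟨b, rfl⟩ -
      exact (hS.total a.2 b.2).imp (fun h => f.le_iff_le.2 h) (fun h => f.le_iff_le.2 h)
    · rw [ncard_range_of_injective (Subtype.val_injective.comp f.injective),
        Nat.card_coe_set_eq]
  · rintro ⟨P, hPT, hP, hle⟩
    obtain ⟨f⟩ := hS.nonempty_orderEmbedding_of_ncard_le hP hle
    exact ⟨f.trans (inclusionOrderEmbedding hPT)⟩

end IsChain

namespace IsFlowerDecomposition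

variable {C U : Set α}

theorem ncard_eq (hF : IsFlowerDecomposition C U) (S : Set α) :
    S.ncard = (S ∩ C).ncard + (S ∩ U).ncard := by
  have hCU : C ∪ U = univ := eq_univ_of_forall hF.mem_or_mem
  rw [← ncard_union_eq (hF.disjoint.mono inter_subset_right inter_subset_right),
    ← inter_union_distrib_left, hCU, inter_univ]

theorem isChain_of_ncard_inter_le_one (hF : IsFlowerDecomposition C U) {S : Set α}
    (h : (S ∩ U).ncard ≤ 1) : IsChain (· ≤ ·) S := by
  intro y hy z hz hne
  by_contra! hyz
  exact hne ((ncard_le_one_iff (toFinite _)).1 h ⟨hy, hF.mem_of_not_le_of_not_le hyz.1 hyz.2⟩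
    ⟨hz, hF.mem_of_not_le_of_not_le hyz.2 hyz.1⟩)

theorem ncard_le_of_isChain (hF : IsFlowerDecomposition C U) {P T : Set α} (hPT : P ⊆ T)
    (hP : IsChain (· ≤ ·) P) : P.ncard ≤ (T ∩ C).ncard + min (T ∩ U).ncard 1 := by
  have hPU : (P ∩ U).ncard ≤ 1 := ncard_le_one_iff_subsingleton.2
    (inter_subsingleton_of_isChain_of_isAntichain hP hF.isAntichain)
  have := ncard_le_ncard (inter_subset_inter_left C hPT)
  have := ncard_le_ncard (inter_subset_inter_left U hPT)
  rw [hF.ncard_eq P]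
  omega

theorem exists_isChain_ncard_eq (hF : IsFlowerDecomposition C U) (T : Set α) :
    ∃ P ⊆ T, IsChain (· ≤ ·) P ∧ P.ncard = (T ∩ C).ncard + min (T ∩ U).ncard 1 := by
  rcases (T ∩ U).eq_empty_or_nonempty with hTU | ⟨u, hu⟩
  · refine ⟨T ∩ C, inter_subset_left, hF.isChain.mono inter_subset_right, ?_⟩
    simp [hTU]
  · refine ⟨insert u (T ∩ C), insert_subset hu.1 inter_subset_left,
      (hF.isChain.mono inter_subset_right).insert fun c hc _ => Or.inr (hF.lt hc.2 hu.2).le, ?_⟩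
    rw [ncard_insert_of_notMem fun hc => hF.disjoint.notMem_of_mem_left hc.2 hu.2]
    have := (nonempty_of_mem hu).ncard_pos
    omega

theorem nonempty_orderEmbedding_iff_ncard_le_of_isChain (hF : IsFlowerDecomposition C U)
    {S T : Set α} (hS : IsChain (· ≤ ·) S) :
    Nonempty (S ↪o T) ↔ S.ncard ≤ (T ∩ C).ncard + min (T ∩ U).ncard 1 := by
  rw [hS.nonempty_orderEmbedding_iff]
  constructor
  · rintro ⟨P, hPT, hP, hle⟩
    exact hle.trans (hF.ncard_le_of_isChain hPT hP)
  · intro hle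
    obtain ⟨P, hPT, hP, hPn⟩ := hF.exists_isChain_ncard_eq T
    exact ⟨P, hPT, hP, hPn ▸ hle⟩

theorem ncard_inter_le_of_orderEmbedding (hF : IsFlowerDecomposition C U) {S T : Set α}
    (f : S ↪o T) (hS : 2 ≤ (S ∩ U).ncard) :
    (S ∩ C).ncard ≤ (T ∩ C).ncard ∧ (S ∩ U).ncard ≤ (T ∩ U).ncard :=
  ⟨ncard_inter_le_of_embedding f.toEmbedding fun s => (hF.mem_of_orderEmbedding f hS s).2,
    ncard_inter_le_of_embedding f.toEmbedding fun s => (hF.mem_of_orderEmbedding f hS s).1⟩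

theorem nonempty_orderEmbedding_of_ncard_inter_le (hF : IsFlowerDecomposition C U)
    {S T : Set α} (hC : (S ∩ C).ncard ≤ (T ∩ C).ncard) (hU : (S ∩ U).ncard ≤ (T ∩ U).ncard) :
    Nonempty (S ↪o T) := by
  classical
  obtain ⟨fC⟩ := (hF.isChain.mono inter_subset_right).nonempty_orderEmbedding_of_ncard_le
    (hF.isChain.mono inter_subset_right) hC
  rw [← Nat.card_coe_set_eq, ← Nat.card_coe_set_eq] at hU
  let fU : ↥(S ∩ U) ↪ ↥(T ∩ U) :=
    ((Finite.equivFin _).toEmbedding.trans (Fin.castLEEmb hU)).trans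
      (Finite.equivFin _).symm.toEmbedding
  let φ : S → T := fun s =>
    if h : (s : α) ∈ C then inclusion inter_subset_left (fC ⟨s, s.2, h⟩)
    else inclusion inter_subset_left (fU ⟨s, s.2, (hF.mem_or_mem s).resolve_left h⟩)
  have hφC : ∀ s : S, ∀ h : (s : α) ∈ C, (φ s : α) = fC ⟨s, s.2, h⟩ := fun s h => by
    simp only [φ, dif_pos h, coe_inclusion]
  have hφU : ∀ s : S, ∀ h : (s : α) ∈ U, (φ s : α) = fU ⟨s, s.2, h⟩ := fun s h => by
    simp only [φ, dif_neg (hF.disjoint.notMem_of_mem_right h), coe_inclusion]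
  refine ⟨.ofMapLEIff φ fun a b => ?_⟩
  rw [← Subtype.coe_le_coe, ← Subtype.coe_le_coe]
  rcases hF.mem_or_mem a with ha | ha <;> rcases hF.mem_or_mem b with hb | hb
  · rw [hφC a ha, hφC b hb]
    exact fC.le_iff_le
  · rw [hφC a ha, hφU b hb]
    exact iff_of_true (hF.lt (fC _).2.2 (fU _).2.2).le (hF.lt ha hb).le
  · rw [hφU a ha, hφC b hb]
    exact iff_of_false (hF.lt (fC _).2.2 (fU _).2.2).not_ge (hF.lt hb ha).not_ge
  · rw [hφU a ha, hφU b hb, hF.le_iff_eq_of_mem (fU _).2.2 (fU _).2.2,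
      hF.le_iff_eq_of_mem ha hb, Subtype.coe_inj, fU.injective.eq_iff]
    exact Subtype.mk_eq_mk

theorem nonempty_orderEmbedding_iff_flowerShape_le (hF : IsFlowerDecomposition C U)
    (S T : Set α) : Nonempty (S ↪o T) ↔ flowerShape C U S ≤ flowerShape C U T := by
  have hS := hF.ncard_eq S
  have hT := hF.ncard_eq T
  unfold flowerShape
  by_cases hS2 : 2 ≤ (S ∩ U).ncard
  · by_cases hT2 : 2 ≤ (T ∩ U).ncard
    · simp only [if_pos hS2, if_pos hT2, Prod.mk_le_mk]
      exact ⟨fun ⟨f⟩ => hF.ncard_inter_le_of_orderEmbedding f hS2,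
        fun h => hF.nonempty_orderEmbedding_of_ncard_inter_le h.1 h.2⟩
    · simp only [if_pos hS2, if_neg hT2, Prod.mk_le_mk]
      refine iff_of_false (fun ⟨f⟩ => ?_) (fun h => ?_)
      · have := (hF.ncard_inter_le_of_orderEmbedding f hS2).2
        omega
      · omega
  · rw [hF.nonempty_orderEmbedding_iff_ncard_le_of_isChain
      (hF.isChain_of_ncard_inter_le_one (by omega)), if_neg hS2]
    split_ifs <;> simp only [Prod.mk_le_mk] <;> omega

theorem flowerShape_le (hF : IsFlowerDecomposition C U) (hU : U.Nonempty) (S : Set α) :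
    flowerShape C U S ≤ (C.ncard, U.ncard) := by
  have hS := hF.ncard_eq S
  have hSC := ncard_le_ncard (inter_subset_right : S ∩ C ⊆ C)
  have hSU := ncard_le_ncard (inter_subset_right : S ∩ U ⊆ U)
  have := hU.ncard_pos
  unfold flowerShape
  split_ifs <;> simp only [Prod.mk_le_mk] <;> omega

theorem flowerShape_eq_of_ncard_inter (hF : IsFlowerDecomposition C U) {S T : Set α}
    (hC : (T ∩ C).ncard = (flowerShape C U S).1) (hU : (T ∩ U).ncard = (flowerShape C U S).2) :
    flowerShape C U T = flowerShape C U S := by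
  have hT := hF.ncard_eq T
  unfold flowerShape at *
  split_ifs at hC hU ⊢ <;> simp only [Prod.ext_iff] at * <;> omega

theorem subRepresentable (hF : IsFlowerDecomposition C U) (hU : U.Nonempty) :
    SubRepresentable α := by
  obtain ⟨F, hFmono, hFC, hFcard⟩ := exists_monotone_subset_ncard_eq C
  obtain ⟨G, hGmono, hGU, hGcard⟩ := exists_monotone_subset_ncard_eq U
  refine subRepresentable_of_classifier (flowerShape C U) (fun p => F p.1 ∪ G p.2)
    hF.nonempty_orderEmbedding_iff_flowerShape_le
    ((hFmono.comp monotone_fst).sup (hGmono.comp monotone_snd)) fun S => ?_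
  obtain ⟨hc, ha⟩ := hF.flowerShape_le hU S
  refine hF.flowerShape_eq_of_ncard_inter ?_ ?_
  · rw [union_inter_distrib_right, inter_eq_left.2 (hFC _),
      (hF.disjoint.symm.mono_left (hGU _)).inter_eq, union_empty, hFcard _ hc]
  · rw [union_inter_distrib_right, inter_eq_left.2 (hGU _),
      (hF.disjoint.mono_left (hFC _)).inter_eq, empty_union, hGcard _ ha]

end IsFlowerDecomposition

end Flower

theorem finite_flower_subrep (α : Type*) [PartialOrder α] [Finite α]
    (h : IsFlower α) : SubRepresentable α := by
  obtain ⟨x, hD, hU, hUx, hcmp⟩ := h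
  exact (isFlowerDecomposition_Iic_Ioi hD hU hcmp).subRepresentable hUx.nonempty
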